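/- The map d : H → H⊗H, d(x) = −(1⊗x) + (x₍₁₎S⁻¹(x₍₃₎) ⊗ x₍₂₎), extended to d : H⊗H → H⊗H⊗H by d(x⊗y) = −(1⊗x⊗y) + (x₍₁₎⊗x₍₂₎⊗y) − (x ⊗ y₍₁₎S⁻¹(y₍₃₎) ⊗ y₍₂₎), satisfies d² = 0 on H, i.e. d(d(x)) = 0 for all x ∈ H. -/

import Mathlib

/- STATEMENT 8: The map d : H → H⊗H, d(x) = −(1⊗x) + (x₍₁₎S⁻¹(x₍₃₎) ⊗ x₍₂₎), extended to
d : H⊗H → H⊗H⊗H by d(x⊗y) = −(1⊗x⊗y) + (x₍₁₎⊗x₍₂₎⊗y) − (x ⊗ y₍₁₎S⁻¹(y₍₃₎) ⊗ y₍₂₎),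
satisfies d(d(x)) = 0 for all x ∈ H. -/

open TensorProduct

set_option maxHeartbeats 1000000
set_option synthInstance.maxHeartbeats 200000

noncomputable section

variable (k : Type) [Field k] (H : Type) [Ring H] [HopfAlgebra k H]

def Delta2 : H →ₗ[k] (H ⊗[k] H) ⊗[k] H :=
  (TensorProduct.map Coalgebra.comul LinearMap.id) ∘ₗ Coalgebra.comul

variable {A B C : Type} [AddCommGroup A] [AddCommGroup B] [AddCommGroup C]
  [Module k A] [Module k B] [Module k C]

def sw3 : (A ⊗[k] B) ⊗[k] C →ₗ[k] (A ⊗[k] C) ⊗[k] B :=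
  (TensorProduct.assoc k A C B).symm.toLinearMap
    ∘ₗ (TensorProduct.map LinearMap.id (TensorProduct.comm k B C).toLinearMap)
    ∘ₗ (TensorProduct.assoc k A B C).toLinearMap

variable (Sinv : H →ₗ[k] H)

/-- `(h₁ ⊗ h₂) ⊗ h₃ ↦ h₁ Sinv(h₃) ⊗ h₂`. -/
def phi2 : (H ⊗[k] H) ⊗[k] H →ₗ[k] H ⊗[k] H :=
  (TensorProduct.map (LinearMap.mul' k H) LinearMap.id)
    ∘ₗ (TensorProduct.map (TensorProduct.map LinearMap.id Sinv) LinearMap.id)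
    ∘ₗ sw3 k

/-- The degree-zero differential. -/
def d0 : H →ₗ[k] H ⊗[k] H :=
  (phi2 k H Sinv ∘ₗ Delta2 k H) - (TensorProduct.mk k H H 1)

/-- The degree-one differential, with `H⊗H⊗H` nested as `H⊗(H⊗H)`. -/
def d1 : H ⊗[k] H →ₗ[k] H ⊗[k] (H ⊗[k] H) :=
  ((TensorProduct.assoc k H H H).toLinearMap
      ∘ₗ (TensorProduct.map Coalgebra.comul LinearMap.id))
    - (TensorProduct.mk k H (H ⊗[k] H) 1)
    - (TensorProduct.map LinearMap.id (phi2 k H Sinv ∘ₗ Delta2 k H))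

/-! ### Auxiliary material for the proof -/

open Coalgebra


noncomputable section
variable (k : Type) [Field k] (H : Type) [Ring H] [HopfAlgebra k H]

section Conv
variable {N : Type} [Ring N] [Algebra k N]

/-- Convolution product on `H →ₗ[k] N`. -/
def conv (f g : H →ₗ[k] N) : H →ₗ[k] N :=
  (LinearMap.mul' k N) ∘ₗ (TensorProduct.map f g) ∘ₗ CoalgebraStruct.comul

variable {k H}

lemma conv_repr {ι : Type} (f g : H →ₗ[k] N) (x : H) (r : Coalgebra.Repr k x ι) :
    conv k H f g x = ∑ i ∈ r.index, f (r.left i) * g (r.right i) := by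
  simp only [conv, LinearMap.comp_apply, ← r.eq, map_sum, TensorProduct.map_tmul,
    LinearMap.mul'_apply]

/-- The convolution unit. -/
def convOne : H →ₗ[k] N := (Algebra.linearMap k N) ∘ₗ Coalgebra.counit

lemma convOne_apply (x : H) :
    (convOne (k := k) (H := H) (N := N)) x = algebraMap k N (counit (R := k) x) := rfl

lemma conv_one (f : H →ₗ[k] N) : conv k H f (convOne (k := k) (H := H)) = f := by
  ext x
  let r := ℛ k x
  rw [conv_repr f _ x r]
  have h0 := Coalgebra.sum_map_tmul_counit_eq (R := k) f x (repr := r)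
  have h1 := congrArg (TensorProduct.rid k N) h0
  simp only [map_sum, TensorProduct.rid_tmul, one_smul] at h1
  rw [← h1]
  refine Finset.sum_congr rfl fun i _ => ?_
  rw [convOne_apply, ← Algebra.commutes, ← Algebra.smul_def]

lemma one_conv (f : H →ₗ[k] N) : conv k H (convOne (k := k) (H := H)) f = f := by
  ext x
  let r := ℛ k x
  rw [conv_repr _ f x r]
  have h0 := Coalgebra.sum_counit_tmul_map_eq (R := k) f x (repr := r)
  have h1 := congrArg (TensorProduct.lid k N) h0
  simp only [map_sum, TensorProduct.lid_tmul, one_smul] at h1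
  rw [← h1]
  refine Finset.sum_congr rfl fun i _ => ?_
  rw [convOne_apply, ← Algebra.smul_def]

lemma conv_assoc (f g h : H →ₗ[k] N) :
    conv k H (conv k H f g) h = conv k H f (conv k H g h) := by
  ext x
  let r := ℛ k x
  let a₁ : (i : r.ι) → Coalgebra.Repr k (r.left i) (H × H) := fun i => ℛ k (r.left i)
  let a₂ : (i : r.ι) → Coalgebra.Repr k (r.right i) (H × H) := fun i => ℛ k (r.right i)
  have h0 := Coalgebra.sum_map_tmul_tmul_eq (R := k) f g h x (repr := r) (a₁ := a₁) (a₂ := a₂)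
  have h1 := congrArg (LinearMap.mul' k N ∘ₗ LinearMap.lTensor N (LinearMap.mul' k N)) h0
  simp only [map_sum, LinearMap.comp_apply, LinearMap.lTensor_tmul, LinearMap.mul'_apply] at h1
  rw [conv_repr _ h x r, conv_repr f _ x r]
  calc ∑ i ∈ r.index, conv k H f g (r.left i) * h (r.right i)
      = ∑ i ∈ r.index, ∑ j ∈ (a₁ i).index,
          f ((a₁ i).left j) * ((g ((a₁ i).right j)) * h (r.right i)) := by
        refine Finset.sum_congr rfl fun i _ => ?_
        rw [conv_repr f g _ (a₁ i), Finset.sum_mul]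
        simp [mul_assoc]
    _ = ∑ i ∈ r.index, ∑ j ∈ (a₂ i).index,
          f (r.left i) * (g ((a₂ i).left j) * h ((a₂ i).right j)) := h1.symm
    _ = ∑ i ∈ r.index, f (r.left i) * conv k H g h (r.right i) := by
        refine Finset.sum_congr rfl fun i _ => ?_
        rw [conv_repr g h _ (a₂ i), Finset.mul_sum]

lemma conv_inv_unique {a b c : H →ₗ[k] N}
    (hab : conv k H a b = convOne (k := k) (H := H))
    (hca : conv k H c a = convOne (k := k) (H := H)) : b = c := by
  have : conv k H c (conv k H a b) = conv k H (conv k H c a) b := (conv_assoc c a b).symm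
  rw [hab, hca, conv_one, one_conv] at this
  exact this.symm

end Conv
end


local notation "S" => HopfAlgebra.antipode (R := k) (A := H)
local notation "Δ" => CoalgebraStruct.comul (R := k) (A := H)

/-- `x₁ ⊗ (x₂ ⊗ (x₃ ⊗ x₄)) ↦ S(x₂)x₃ ⊗ S(x₁)x₄`. -/
def Wmap : H ⊗[k] (H ⊗[k] (H ⊗[k] H)) →ₗ[k] H ⊗[k] H :=
  (TensorProduct.map (LinearMap.mul' k H) (LinearMap.mul' k H))
  ∘ₗ (TensorProduct.assoc k (H ⊗[k] H) H H).toLinearMap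
  ∘ₗ (LinearMap.rTensor H ((TensorProduct.comm k H (H ⊗[k] H)).toLinearMap))
  ∘ₗ (TensorProduct.assoc k H (H ⊗[k] H) H).symm.toLinearMap
  ∘ₗ (LinearMap.lTensor H ((TensorProduct.assoc k H H H).symm.toLinearMap))
  ∘ₗ (TensorProduct.map (HopfAlgebra.antipode (R := k))
        (TensorProduct.map (HopfAlgebra.antipode (R := k)) LinearMap.id))

lemma Wmap_tmul (a b c d : H) :
    Wmap k H (a ⊗ₜ[k] (b ⊗ₜ[k] (c ⊗ₜ[k] d))) =
      (HopfAlgebra.antipode (R := k) b * c) ⊗ₜ[k] (HopfAlgebra.antipode (R := k) a * d) := by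
  simp [Wmap]


/-- `Δ ∘ S` as a linear map. -/
def R0 : H →ₗ[k] H ⊗[k] H := CoalgebraStruct.comul ∘ₗ HopfAlgebra.antipode (R := k)

/-- `(S ⊗ S) ∘ τ ∘ Δ` as a linear map. -/
def L0 : H →ₗ[k] H ⊗[k] H :=
  (TensorProduct.comm k H H).toLinearMap
    ∘ₗ (TensorProduct.map (HopfAlgebra.antipode (R := k)) (HopfAlgebra.antipode (R := k)))
    ∘ₗ CoalgebraStruct.comul

lemma conv_comul_R0 : conv k H Δ (R0 k H) = convOne (k := k) (H := H) := by
  ext x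
  let r := ℛ k x
  rw [conv_repr _ _ x r, convOne_apply]
  have : ∀ i : r.ι, Δ (r.left i) * (R0 k H) (r.right i) = Δ (r.left i * S (r.right i)) := by
    intro i; rw [Bialgebra.comul_mul]; rfl
  simp only [this, ← map_sum, HopfAlgebra.sum_mul_antipode_eq_algebraMap_counit r, Bialgebra.comul_algebraMap]

lemma conv_L0_comul : conv k H (L0 k H) Δ = convOne (k := k) (H := H) := by
  ext x
  let r := ℛ k x
  let a₁ : (i : r.ι) → Coalgebra.Repr k (r.left i) (H × H) := fun i => ℛ k (r.left i)
  let a₂ : (i : r.ι) → Coalgebra.Repr k (r.right i) (H × H) := fun i => ℛ k (r.right i)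
  let b : (i : r.ι) → (j : (a₂ i).ι) → Coalgebra.Repr k ((a₂ i).left j) (H × H) :=
    fun i j => ℛ k ((a₂ i).left j)
  let c : (i : r.ι) → (j : (a₂ i).ι) → Coalgebra.Repr k ((a₂ i).right j) (H × H) :=
    fun i j => ℛ k ((a₂ i).right j)
  rw [conv_repr _ _ x r, convOne_apply]
  -- step 0 : identify the convolution with `Wmap` applied to a Δ³ expression
  have L0_apply : ∀ i : r.ι, (L0 k H) (r.left i) =
      ∑ j ∈ (a₁ i).index, (S ((a₁ i).right j)) ⊗ₜ[k] (S ((a₁ i).left j)) := by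
    intro i
    simp only [L0, LinearMap.comp_apply, ← (a₁ i).eq, map_sum, TensorProduct.map_tmul,
      TensorProduct.comm_tmul, LinearMap.coe_coe, LinearEquiv.coe_coe]
  have step0 : ∑ i ∈ r.index, (L0 k H) (r.left i) * Δ (r.right i) =
      ∑ i ∈ r.index, ∑ j ∈ (a₁ i).index,
        Wmap k H ((a₁ i).left j ⊗ₜ[k] ((a₁ i).right j ⊗ₜ[k] Δ (r.right i))) := by
    refine Finset.sum_congr rfl fun i _ => ?_
    rw [L0_apply i, Finset.sum_mul]
    refine Finset.sum_congr rfl fun j _ => ?_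
    rw [← (a₂ i).eq]
    simp only [TensorProduct.tmul_sum, map_sum, Wmap_tmul, Finset.mul_sum,
      Algebra.TensorProduct.tmul_mul_tmul]
  -- step 1 : coassociativity at the outer level
  have K1 := Coalgebra.sum_tmul_tmul_eq (R := k) r a₁ a₂
  have K1' := congrArg (Wmap k H ∘ₗ LinearMap.lTensor H (LinearMap.lTensor H Δ)) K1
  simp only [map_sum, LinearMap.comp_apply, LinearMap.lTensor_tmul] at K1'
  -- step 2 : coassociativity at the inner level
  have K2 : ∀ i : r.ι,
      ∑ j ∈ (a₂ i).index, Wmap k H (r.left i ⊗ₜ[k] ((a₂ i).left j ⊗ₜ[k] Δ ((a₂ i).right j))) =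
      ∑ j ∈ (a₂ i).index, ∑ u ∈ (b i j).index,
        Wmap k H (r.left i ⊗ₜ[k] ((b i j).left u ⊗ₜ[k] ((b i j).right u ⊗ₜ[k] (a₂ i).right j))) := by
    intro i
    have K2' := Coalgebra.sum_tmul_tmul_eq (R := k) (a₂ i) (b i) (c i)
    have := congrArg ((Wmap k H) ∘ₗ (TensorProduct.mk k H (H ⊗[k] (H ⊗[k] H)) (r.left i))) K2'
    simp only [map_sum, LinearMap.comp_apply, TensorProduct.mk_apply] at this
    calc ∑ j ∈ (a₂ i).index,
          Wmap k H (r.left i ⊗ₜ[k] ((a₂ i).left j ⊗ₜ[k] Δ ((a₂ i).right j)))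
        = ∑ j ∈ (a₂ i).index, ∑ v ∈ (c i j).index,
            Wmap k H (r.left i ⊗ₜ[k] ((a₂ i).left j ⊗ₜ[k]
              ((c i j).left v ⊗ₜ[k] (c i j).right v))) := by
          refine Finset.sum_congr rfl fun j _ => ?_
          rw [← (c i j).eq]
          simp only [TensorProduct.tmul_sum, map_sum]
      _ = _ := this.symm
  calc ∑ i ∈ r.index, (L0 k H) (r.left i) * Δ (r.right i)
      = ∑ i ∈ r.index, ∑ j ∈ (a₂ i).index,
          Wmap k H (r.left i ⊗ₜ[k] ((a₂ i).left j ⊗ₜ[k] Δ ((a₂ i).right j))) := by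
        rw [step0, K1']
    _ = ∑ i ∈ r.index, ∑ j ∈ (a₂ i).index, ∑ u ∈ (b i j).index,
          ((S ((b i j).left u)) * (b i j).right u) ⊗ₜ[k] ((S (r.left i)) * (a₂ i).right j) := by
        refine Finset.sum_congr rfl fun i _ => ?_
        rw [K2 i]
        simp only [Wmap_tmul]
    _ = ∑ i ∈ r.index, ∑ j ∈ (a₂ i).index,
          (counit (R := k) ((a₂ i).left j)) • ((1 : H) ⊗ₜ[k] ((S (r.left i)) * (a₂ i).right j)) := by
        refine Finset.sum_congr rfl fun i _ => Finset.sum_congr rfl fun j _ => ?_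
        rw [← TensorProduct.sum_tmul, HopfAlgebra.sum_antipode_mul_eq_algebraMap_counit (b i j),
          Algebra.algebraMap_eq_smul_one, TensorProduct.smul_tmul']
    _ = ∑ i ∈ r.index, (1 : H) ⊗ₜ[k] ((S (r.left i)) * r.right i) := by
        refine Finset.sum_congr rfl fun i _ => ?_
        have h2 := congrArg (TensorProduct.lid k H) (Coalgebra.sum_counit_tmul_eq (R := k) (a₂ i))
        simp only [map_sum, TensorProduct.lid_tmul, one_smul] at h2
        calc ∑ j ∈ (a₂ i).index,
              (counit (R := k) ((a₂ i).left j)) • ((1 : H) ⊗ₜ[k] ((S (r.left i)) * (a₂ i).right j))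
            = (1 : H) ⊗ₜ[k] ((S (r.left i)) * ∑ j ∈ (a₂ i).index,
                (counit (R := k) ((a₂ i).left j)) • (a₂ i).right j) := by
              rw [Finset.mul_sum, TensorProduct.tmul_sum]
              refine Finset.sum_congr rfl fun j _ => ?_
              rw [mul_smul_comm, TensorProduct.tmul_smul]
          _ = (1 : H) ⊗ₜ[k] ((S (r.left i)) * r.right i) := by rw [h2]
    _ = algebraMap k (H ⊗[k] H) (counit (R := k) x) := by
        rw [← TensorProduct.tmul_sum, HopfAlgebra.sum_antipode_mul_eq_algebraMap_counit r,
          Algebra.TensorProduct.algebraMap_apply, Algebra.algebraMap_eq_smul_one,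
          TensorProduct.smul_tmul]

/-- The antipode is an anti-coalgebra morphism. -/
lemma comul_antipode_eq : R0 k H = L0 k H :=
  conv_inv_unique (conv_comul_R0 k H) (conv_L0_comul k H)


section Nat
variable {k : Type} [Field k] {M₁ M₂ M₃ M₄ : Type}
  [AddCommGroup M₁] [AddCommGroup M₂] [AddCommGroup M₃] [AddCommGroup M₄]
  [Module k M₁] [Module k M₂] [Module k M₃] [Module k M₄]

lemma nat1 (f : M₃ →ₗ[k] M₄) :
    (LinearMap.lTensor (M₁ ⊗[k] M₂) f) ∘ₗ (TensorProduct.assoc k M₁ M₂ M₃).symm.toLinearMap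
      = (TensorProduct.assoc k M₁ M₂ M₄).symm.toLinearMap
          ∘ₗ (LinearMap.lTensor M₁ (LinearMap.lTensor M₂ f)) := by
  ext a b c
  simp

lemma nat2 (f : M₂ →ₗ[k] M₄) :
    (LinearMap.rTensor M₃ (LinearMap.lTensor M₁ f))
        ∘ₗ (TensorProduct.assoc k M₁ M₂ M₃).symm.toLinearMap
      = (TensorProduct.assoc k M₁ M₄ M₃).symm.toLinearMap
          ∘ₗ (LinearMap.lTensor M₁ (LinearMap.rTensor M₃ f)) := by
  ext a b c
  simp

end Nat

section Rot

/-- `Δ³ : H → H⊗(H⊗H)`, right-nested. -/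
def D3m : H →ₗ[k] H ⊗[k] (H ⊗[k] H) := LinearMap.lTensor H Δ ∘ₗ Δ

/-- `Δ⁴`, right-nested. -/
def D4m : H →ₗ[k] H ⊗[k] (H ⊗[k] (H ⊗[k] H)) :=
  LinearMap.lTensor H (LinearMap.lTensor H Δ) ∘ₗ D3m k H

/-- `Δ⁵`, right-nested. -/
def D5m : H →ₗ[k] H ⊗[k] (H ⊗[k] (H ⊗[k] (H ⊗[k] H))) :=
  LinearMap.lTensor H (LinearMap.lTensor H (LinearMap.lTensor H Δ)) ∘ₗ D4m k H

lemma L3 (x : H) : LinearMap.rTensor (H ⊗[k] H) Δ (D3m k H x)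
    = (TensorProduct.assoc k H H (H ⊗[k] H)).symm (D4m k H x) := by
  have h1 : ∀ z : H ⊗[k] H,
      LinearMap.rTensor (H ⊗[k] H) Δ (LinearMap.lTensor H Δ z)
        = LinearMap.lTensor (H ⊗[k] H) Δ (LinearMap.rTensor H Δ z) := by
    intro z
    rw [← LinearMap.comp_apply, ← LinearMap.comp_apply,
      LinearMap.rTensor_comp_lTensor, LinearMap.lTensor_comp_rTensor]
  rw [D3m, LinearMap.comp_apply, h1, ← Coalgebra.coassoc_symm_apply]
  have h2 := LinearMap.congr_fun (nat1 (k := k) (M₁ := H) (M₂ := H) Δ)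
    (LinearMap.lTensor H Δ (Δ x))
  simp only [LinearMap.comp_apply, LinearEquiv.coe_coe] at h2
  rw [h2]
  rfl

lemma L2 (x : H) : LinearMap.lTensor H (LinearMap.rTensor H Δ) (D3m k H x)
    = LinearMap.lTensor H (TensorProduct.assoc k H H H).symm.toLinearMap (D4m k H x) := by
  have e : LinearMap.rTensor H Δ ∘ₗ Δ
      = (TensorProduct.assoc k H H H).symm.toLinearMap ∘ₗ LinearMap.lTensor H Δ ∘ₗ Δ :=
    Coalgebra.coassoc_symm.symm
  calc LinearMap.lTensor H (LinearMap.rTensor H Δ) (D3m k H x)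
      = LinearMap.lTensor H (LinearMap.rTensor H Δ ∘ₗ Δ) (Δ x) := by
        rw [D3m, LinearMap.comp_apply, ← LinearMap.lTensor_comp_apply]
    _ = LinearMap.lTensor H ((TensorProduct.assoc k H H H).symm.toLinearMap
          ∘ₗ LinearMap.lTensor H Δ ∘ₗ Δ) (Δ x) := by rw [e]
    _ = LinearMap.lTensor H (TensorProduct.assoc k H H H).symm.toLinearMap (D4m k H x) := by
        simp only [D4m, D3m, LinearMap.lTensor_comp, LinearMap.comp_apply]

lemma Claim2 (x : H) :
    TensorProduct.map Δ (LinearMap.lTensor H Δ) (D3m k H x)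
      = (TensorProduct.assoc k H H (H ⊗[k] (H ⊗[k] H))).symm (D5m k H x) := by
  have split : ∀ z : H ⊗[k] (H ⊗[k] H),
      TensorProduct.map Δ (LinearMap.lTensor H Δ) z
        = LinearMap.lTensor (H ⊗[k] H) (LinearMap.lTensor H Δ)
            (LinearMap.rTensor (H ⊗[k] H) Δ z) := by
    intro z
    rw [← LinearMap.comp_apply, LinearMap.lTensor_comp_rTensor]
  rw [split, L3]
  have h2 := LinearMap.congr_fun (nat1 (k := k) (M₁ := H) (M₂ := H) (LinearMap.lTensor H Δ))
    (D4m k H x)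
  simp only [LinearMap.comp_apply, LinearEquiv.coe_coe] at h2
  rw [h2]
  rfl

lemma Claim4 (x : H) :
    LinearMap.lTensor H (LinearMap.rTensor H (D3m k H)) (D3m k H x)
      = LinearMap.lTensor H ((TensorProduct.assoc k H (H ⊗[k] H) H).symm.toLinearMap
          ∘ₗ LinearMap.lTensor H (TensorProduct.assoc k H H H).symm.toLinearMap)
          (D5m k H x) := by
  have inner : LinearMap.rTensor H (D3m k H) ∘ₗ Δ
      = (TensorProduct.assoc k H (H ⊗[k] H) H).symm.toLinearMap
          ∘ₗ LinearMap.lTensor H (TensorProduct.assoc k H H H).symm.toLinearMap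
          ∘ₗ D4m k H := by
    apply LinearMap.ext; intro y
    have s1 : LinearMap.rTensor H (D3m k H) (Δ y)
        = LinearMap.rTensor H (LinearMap.lTensor H Δ) (LinearMap.rTensor H Δ (Δ y)) := by
      rw [D3m, LinearMap.rTensor_comp, LinearMap.comp_apply]
    have s2 : LinearMap.rTensor H Δ (Δ y)
        = (TensorProduct.assoc k H H H).symm (LinearMap.lTensor H Δ (Δ y)) := by
      rw [← Coalgebra.coassoc_symm_apply]
    have s3 := LinearMap.congr_fun (nat2 (k := k) (M₁ := H) (M₂ := H) (M₃ := H) Δ)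
      (LinearMap.lTensor H Δ (Δ y))
    simp only [LinearMap.comp_apply, LinearEquiv.coe_coe] at s3
    simp only [LinearMap.comp_apply]
    rw [s1, s2]
    rw [s3]
    have l2 := L2 k H y
    rw [D3m, LinearMap.comp_apply] at l2
    rw [l2]
    rfl
  have gen : ∀ f : H →ₗ[k] (H ⊗[k] (H ⊗[k] H)),
      LinearMap.lTensor H (LinearMap.rTensor H f) (D3m k H x)
        = LinearMap.lTensor H (LinearMap.rTensor H f ∘ₗ Δ) (Δ x) := by
    intro f
    rw [D3m, LinearMap.comp_apply, ← LinearMap.lTensor_comp_apply]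
  rw [gen, inner]
  simp only [D5m, D4m, D3m, LinearMap.lTensor_comp, LinearMap.comp_apply]

end Rot


/-! ### `Sinv`-dependent constructions -/

section SinvPart

/-- `a ⊗ (b ⊗ c) ↦ a·Sinv(c) ⊗ b`. -/
def Pp : H ⊗[k] (H ⊗[k] H) →ₗ[k] H ⊗[k] H :=
  phi2 k H Sinv ∘ₗ (TensorProduct.assoc k H H H).symm.toLinearMap

lemma Pp_tmul (a b c : H) :
    Pp k H Sinv (a ⊗ₜ[k] (b ⊗ₜ[k] c)) = (a * Sinv c) ⊗ₜ[k] b := by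
  simp [Pp, phi2, sw3]

lemma phi_eq (x : H) :
    (phi2 k H Sinv ∘ₗ Delta2 k H) x = Pp k H Sinv (D3m k H x) := by
  have h1 : Delta2 k H x = (TensorProduct.assoc k H H H).symm (D3m k H x) := by
    rw [Delta2, D3m]
    exact (Coalgebra.coassoc_symm_apply x).symm
  rw [LinearMap.comp_apply, h1, Pp, LinearMap.comp_apply]
  rfl

/-- `A ⊗ C ↦ A · (Sinv ⊗ Sinv)(τ⁻¹ C)` on `(H⊗H)⊗(H⊗H)`. -/
def G1 : (H ⊗[k] H) ⊗[k] (H ⊗[k] H) →ₗ[k] H ⊗[k] H :=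
  LinearMap.mul' k (H ⊗[k] H)
    ∘ₗ LinearMap.lTensor (H ⊗[k] H)
        (TensorProduct.map Sinv Sinv ∘ₗ (TensorProduct.comm k H H).symm.toLinearMap)

def F1 : (H ⊗[k] H) ⊗[k] (H ⊗[k] (H ⊗[k] H)) →ₗ[k] (H ⊗[k] H) ⊗[k] H :=
  TensorProduct.map (G1 k H Sinv) LinearMap.id
    ∘ₗ (TensorProduct.assoc k (H ⊗[k] H) (H ⊗[k] H) H).symm.toLinearMap
    ∘ₗ LinearMap.lTensor (H ⊗[k] H) ((TensorProduct.comm k H (H ⊗[k] H)).toLinearMap)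

lemma F1_apply (s t : H ⊗[k] H) (b : H) :
    F1 k H Sinv (s ⊗ₜ[k] (b ⊗ₜ[k] t))
      = (s * TensorProduct.map Sinv Sinv ((TensorProduct.comm k H H).symm t)) ⊗ₜ[k] b := by
  simp [F1, G1]

lemma claim1
    (hN1 : ∀ h : H, Δ (Sinv h)
      = TensorProduct.map Sinv Sinv ((TensorProduct.comm k H H).symm (Δ h)))
    (a b c : H) :
    LinearMap.rTensor H Δ (Pp k H Sinv (a ⊗ₜ[k] (b ⊗ₜ[k] c)))
      = F1 k H Sinv (TensorProduct.map Δ (LinearMap.lTensor H Δ) (a ⊗ₜ[k] (b ⊗ₜ[k] c))) := by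
  rw [Pp_tmul, TensorProduct.map_tmul, LinearMap.lTensor_tmul, F1_apply,
    LinearMap.rTensor_tmul, Bialgebra.comul_mul, hN1 c]

def F2 : H ⊗[k] ((H ⊗[k] (H ⊗[k] H)) ⊗[k] H) →ₗ[k] H ⊗[k] (H ⊗[k] (H ⊗[k] H)) :=
  TensorProduct.map (LinearMap.mul' k H ∘ₗ LinearMap.lTensor H Sinv) LinearMap.id
    ∘ₗ (TensorProduct.assoc k H H (H ⊗[k] (H ⊗[k] H))).symm.toLinearMap
    ∘ₗ LinearMap.lTensor H ((TensorProduct.comm k (H ⊗[k] (H ⊗[k] H)) H).toLinearMap)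

lemma F2_apply (a c : H) (Bv : H ⊗[k] (H ⊗[k] H)) :
    F2 k H Sinv (a ⊗ₜ[k] (Bv ⊗ₜ[k] c)) = (a * Sinv c) ⊗ₜ[k] Bv := by
  simp [F2]

lemma claim3 (a b c : H) :
    LinearMap.lTensor H (D3m k H) (Pp k H Sinv (a ⊗ₜ[k] (b ⊗ₜ[k] c)))
      = F2 k H Sinv
          (LinearMap.lTensor H (LinearMap.rTensor H (D3m k H)) (a ⊗ₜ[k] (b ⊗ₜ[k] c))) := by
  rw [Pp_tmul, LinearMap.lTensor_tmul, LinearMap.lTensor_tmul, LinearMap.rTensor_tmul, F2_apply]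

lemma claim5 :
    (TensorProduct.assoc k H H H).toLinearMap ∘ₗ F1 k H Sinv
        ∘ₗ (TensorProduct.assoc k H H (H ⊗[k] (H ⊗[k] H))).symm.toLinearMap
      = LinearMap.lTensor H (Pp k H Sinv) ∘ₗ F2 k H Sinv
          ∘ₗ LinearMap.lTensor H
              ((TensorProduct.assoc k H (H ⊗[k] H) H).symm.toLinearMap
                ∘ₗ LinearMap.lTensor H (TensorProduct.assoc k H H H).symm.toLinearMap) := by
  ext x1 x2 x3 x4 x5
  simp [F1, F2, G1, Pp, phi2, sw3]

lemma core
    (hN1 : ∀ h : H, Δ (Sinv h)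
      = TensorProduct.map Sinv Sinv ((TensorProduct.comm k H H).symm (Δ h)))
    (x : H) :
    (TensorProduct.assoc k H H H)
        (LinearMap.rTensor H Δ ((phi2 k H Sinv ∘ₗ Delta2 k H) x))
      = LinearMap.lTensor H (phi2 k H Sinv ∘ₗ Delta2 k H)
          ((phi2 k H Sinv ∘ₗ Delta2 k H) x) := by
  -- rewrite both sides through `D5m` and conclude with `claim5`
  have c1 : ∀ z : H ⊗[k] (H ⊗[k] H),
      LinearMap.rTensor H Δ (Pp k H Sinv z)
        = F1 k H Sinv (TensorProduct.map Δ (LinearMap.lTensor H Δ) z) := by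
    intro z
    induction z using TensorProduct.induction_on with
    | zero => simp
    | tmul a w =>
      induction w using TensorProduct.induction_on with
      | zero => simp [TensorProduct.tmul_zero]
      | tmul b c => exact claim1 k H Sinv hN1 a b c
      | add u v hu hv => simp only [TensorProduct.tmul_add, map_add, hu, hv]
    | add u v hu hv => simp only [map_add, hu, hv]
  have c3 : ∀ z : H ⊗[k] (H ⊗[k] H),
      LinearMap.lTensor H (D3m k H) (Pp k H Sinv z)
        = F2 k H Sinv (LinearMap.lTensor H (LinearMap.rTensor H (D3m k H)) z) := by
    intro z
    induction z using TensorProduct.induction_on with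
    | zero => simp
    | tmul a w =>
      induction w using TensorProduct.induction_on with
      | zero => simp [TensorProduct.tmul_zero]
      | tmul b c => exact claim3 k H Sinv a b c
      | add u v hu hv => simp only [TensorProduct.tmul_add, map_add, hu, hv]
    | add u v hu hv => simp only [map_add, hu, hv]
  have lhs_eq :
      (TensorProduct.assoc k H H H)
          (LinearMap.rTensor H Δ ((phi2 k H Sinv ∘ₗ Delta2 k H) x))
        = ((TensorProduct.assoc k H H H).toLinearMap ∘ₗ F1 k H Sinv
            ∘ₗ (TensorProduct.assoc k H H (H ⊗[k] (H ⊗[k] H))).symm.toLinearMap)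
            (D5m k H x) := by
    rw [phi_eq, c1, Claim2]
    rfl
  have rhs_eq :
      LinearMap.lTensor H (phi2 k H Sinv ∘ₗ Delta2 k H)
          ((phi2 k H Sinv ∘ₗ Delta2 k H) x)
        = (LinearMap.lTensor H (Pp k H Sinv) ∘ₗ F2 k H Sinv
            ∘ₗ LinearMap.lTensor H
                ((TensorProduct.assoc k H (H ⊗[k] H) H).symm.toLinearMap
                  ∘ₗ LinearMap.lTensor H (TensorProduct.assoc k H H H).symm.toLinearMap))
            (D5m k H x) := by
    have e1 : phi2 k H Sinv ∘ₗ Delta2 k H = Pp k H Sinv ∘ₗ D3m k H :=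
      LinearMap.ext fun y => phi_eq k H Sinv y
    rw [phi_eq, e1, LinearMap.lTensor_comp, LinearMap.comp_apply, c3, Claim4]
    rfl
  rw [lhs_eq, rhs_eq, claim5]

end SinvPart

theorem statement8
    (hS1 : Sinv ∘ₗ HopfAlgebra.antipode (R := k) = LinearMap.id)
    (hS2 : HopfAlgebra.antipode (R := k) ∘ₗ Sinv = LinearMap.id) :
    ∀ x : H, d1 k H Sinv (d0 k H Sinv x) = 0 := by
  -- first, `Sinv` is anti-comultiplicative
  have hanti : ∀ y : H, CoalgebraStruct.comul (R := k) (HopfAlgebra.antipode (R := k) y)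
      = (TensorProduct.comm k H H)
          (TensorProduct.map (HopfAlgebra.antipode (R := k)) (HopfAlgebra.antipode (R := k))
            (Coalgebra.comul y)) :=
    fun y => LinearMap.congr_fun (comul_antipode_eq k H) y
  have hN1 : ∀ h : H, CoalgebraStruct.comul (R := k) (Sinv h)
      = TensorProduct.map Sinv Sinv ((TensorProduct.comm k H H).symm (Coalgebra.comul h)) := by
    intro h
    have e2 : HopfAlgebra.antipode (R := k) (Sinv h) = h := LinearMap.congr_fun hS2 h
    have e3 := hanti (Sinv h)
    rw [e2] at e3
    have e4 : (TensorProduct.comm k H H).symm (CoalgebraStruct.comul (R := k) h)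
        = TensorProduct.map (HopfAlgebra.antipode (R := k)) (HopfAlgebra.antipode (R := k))
            (Coalgebra.comul (Sinv h)) := by
      rw [e3, LinearEquiv.symm_apply_apply]
    have e5 : ∀ z : H ⊗[k] H, TensorProduct.map Sinv Sinv
        (TensorProduct.map (HopfAlgebra.antipode (R := k)) (HopfAlgebra.antipode (R := k)) z)
          = z := by
      intro z
      rw [← LinearMap.comp_apply, ← TensorProduct.map_comp, hS1, TensorProduct.map_id,
        LinearMap.id_apply]
    rw [e4, e5]
  intro x
  have hcore := core k H Sinv hN1 x
  have hcore2 : (TensorProduct.assoc k H H H)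
        ((TensorProduct.map (CoalgebraStruct.comul (R := k)) (LinearMap.id (M := H)))
          ((phi2 k H Sinv) ((Delta2 k H) x)))
      = (TensorProduct.map (LinearMap.id (M := H)) (phi2 k H Sinv ∘ₗ Delta2 k H))
          ((phi2 k H Sinv) ((Delta2 k H) x)) := hcore
  simp only [d1, d0, LinearMap.sub_apply, map_sub, LinearMap.comp_apply,
    TensorProduct.mk_apply, LinearEquiv.coe_coe]
  rw [hcore2]
  have h1a : (TensorProduct.map (CoalgebraStruct.comul (R := k)) (LinearMap.id (M := H)))
      ((1 : H) ⊗ₜ[k] x) = ((1 : H) ⊗ₜ[k] (1 : H)) ⊗ₜ[k] x := by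
    rw [TensorProduct.map_tmul, LinearMap.id_apply, Bialgebra.comul_one,
      Algebra.TensorProduct.one_def]
  rw [h1a, TensorProduct.assoc_tmul]
  have h1b : (TensorProduct.map (LinearMap.id (M := H)) (phi2 k H Sinv ∘ₗ Delta2 k H))
      ((1 : H) ⊗ₜ[k] x) = (1 : H) ⊗ₜ[k] ((phi2 k H Sinv) ((Delta2 k H) x)) := by
    rw [TensorProduct.map_tmul, LinearMap.id_apply, LinearMap.comp_apply]
  rw [h1b]
  abel

end
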